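/- arXiv:2604.21423 — 2 statements merged into one kernel-verified Lean document; each statement's English description precedes it below -/
import Mathlib

section
/- Let F be the log-normal distribution on (0,∞) with density f(α) = (1/(α σ √(2π))) exp(−(log α − μ)²/(2σ²)) for parameters μ ∈ ℝ, σ > 0, and let L(x) = ∫₀^∞ e^{−αx} f(α) dα be its Laplace transform. Then for every constant c > 1, L(cx)/L(x) → 0 as x → ∞. -/
open MeasureTheory Real Filter

/-- Density of the log-normal distribution with parameters `μ` and `σ` on `(0, ∞)`. -/
noncomputable def lognormalPdf (μ σ : ℝ) (α : ℝ) : ℝ :=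
  (1 / (α * σ * Real.sqrt (2 * Real.pi))) * Real.exp (-(Real.log α - μ) ^ 2 / (2 * σ ^ 2))

/-- Laplace transform of the log-normal distribution. -/
noncomputable def lnLaplace (μ σ : ℝ) (x : ℝ) : ℝ :=
  ∫ α in Set.Ioi (0 : ℝ), Real.exp (-α * x) * lognormalPdf μ σ α

/-!
Substituting `α ↦ c α` shows that `L(c x)` is the Laplace transform of the log-normal density
with `μ` replaced by `μ + log c`, and the quotient of these two densities is
`exp (log c / σ² · (log α - μ - log c / 2))`, which tends to `0` as `α → 0⁺`.
For large `x` the Laplace transform only sees the density near `0`: the part of the integral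
beyond `δ` is `O(e^{-δx})`, while the transform of a density positive near `0` is at least
a constant times `e^{-δx/2}`. Hence a density that is `o(f)` at `0⁺` has a Laplace transform
that is `o(L f)` at `∞`.
-/

open Set Asymptotics Topology

noncomputable def laplace (f : ℝ → ℝ) (x : ℝ) : ℝ :=
  ∫ α in Ioi 0, exp (-α * x) * f α

section Laplace

variable {f : ℝ → ℝ} {x δ : ℝ}

lemma integrableOn_exp_neg_mul_mul (hf : IntegrableOn f (Ioi 0)) (hx : 0 ≤ x) :
    IntegrableOn (fun α => exp (-α * x) * f α) (Ioi 0) := by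
  refine hf.bdd_mul (c := 1)
    (by fun_prop : Continuous fun α => exp (-α * x)).aestronglyMeasurable ?_
  filter_upwards [ae_restrict_mem measurableSet_Ioi] with α (hα : 0 < α)
  rw [norm_of_nonneg (exp_pos _).le, exp_le_one_iff]
  nlinarith

lemma laplace_nonneg (hf : ∀ α ∈ Ioi 0, 0 ≤ f α) (x : ℝ) : 0 ≤ laplace f x :=
  setIntegral_nonneg measurableSet_Ioi fun α hα => mul_nonneg (exp_pos _).le (hf α hα)

lemma norm_laplace_le (f : ℝ → ℝ) (x : ℝ) : ‖laplace f x‖ ≤ laplace (fun α => ‖f α‖) x := by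
  refine (norm_integral_le_integral_norm _).trans_eq ?_
  simp only [laplace, norm_mul, norm_of_nonneg (exp_pos _).le]

lemma laplace_mul_left (f : ℝ → ℝ) {c : ℝ} (hc : 0 < c) (x : ℝ) :
    laplace f (c * x) = laplace (fun α => c⁻¹ * f (c⁻¹ * α)) x := by
  have h := integral_comp_mul_left_Ioi (fun α => exp (-α * x) * f (c⁻¹ * α)) 0 hc
  simp only [mul_zero, inv_mul_cancel_left₀ hc.ne', smul_eq_mul] at h
  simp only [laplace, mul_left_comm _ c⁻¹, integral_const_mul, ← h]
  congr 1
  ext α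
  ring_nf

lemma setIntegral_le_laplace (hf : IntegrableOn f (Ioi 0)) (hf0 : ∀ α ∈ Ioi 0, 0 ≤ f α)
    (hx : 0 ≤ x) {s : Set ℝ} (hs : s ⊆ Ioi 0) :
    ∫ α in s, exp (-α * x) * f α ≤ laplace f x :=
  setIntegral_mono_set (integrableOn_exp_neg_mul_mul hf hx)
    ((ae_restrict_mem measurableSet_Ioi).mono fun α hα => mul_nonneg (exp_pos _).le (hf0 α hα))
    hs.eventuallyLE

lemma exp_neg_mul_mul_setIntegral_le_laplace (hf : IntegrableOn f (Ioi 0))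
    (hf0 : ∀ α ∈ Ioi 0, 0 ≤ f α) (hx : 0 ≤ x) (s : ℝ) :
    exp (-s * x) * ∫ α in Ioc 0 s, f α ≤ laplace f x :=
  calc exp (-s * x) * ∫ α in Ioc 0 s, f α
      = ∫ α in Ioc 0 s, exp (-s * x) * f α := (integral_const_mul _ _).symm
    _ ≤ ∫ α in Ioc 0 s, exp (-α * x) * f α := by
        refine setIntegral_mono_on ((hf.mono_set Ioc_subset_Ioi_self).const_mul _)
          ((integrableOn_exp_neg_mul_mul hf hx).mono_set Ioc_subset_Ioi_self) measurableSet_Ioc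
          fun α hα => ?_
        have := hf0 α hα.1
        gcongr
        exact hα.2
    _ ≤ laplace f x := setIntegral_le_laplace hf hf0 hx Ioc_subset_Ioi_self

lemma laplace_le_setIntegral_add (hf : IntegrableOn f (Ioi 0)) (hf0 : ∀ α ∈ Ioi 0, 0 ≤ f α)
    (hδ : 0 ≤ δ) (hx : 1 ≤ x) :
    laplace f x ≤ (∫ α in Ioc 0 δ, exp (-α * x) * f α) + exp (-δ * (x - 1)) * laplace f 1 := by
  have hI := integrableOn_exp_neg_mul_mul hf (zero_le_one.trans hx)
  rw [laplace, ← Ioc_union_Ioi_eq_Ioi hδ, setIntegral_union (Ioc_disjoint_Ioi le_rfl)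
    measurableSet_Ioi (hI.mono_set Ioc_subset_Ioi_self) (hI.mono_set (Ioi_subset_Ioi hδ))]
  refine add_le_add (le_refl _) ?_
  calc ∫ α in Ioi δ, exp (-α * x) * f α
      ≤ ∫ α in Ioi δ, exp (-δ * (x - 1)) * (exp (-α * 1) * f α) := by
        refine setIntegral_mono_on (hI.mono_set (Ioi_subset_Ioi hδ))
          (((integrableOn_exp_neg_mul_mul hf zero_le_one).mono_set
            (Ioi_subset_Ioi hδ)).const_mul _) measurableSet_Ioi fun α (hα : δ < α) => ?_
        have := hf0 α (hδ.trans_lt hα)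
        rw [← mul_assoc, ← exp_add]
        gcongr
        nlinarith
    _ = exp (-δ * (x - 1)) * ∫ α in Ioi δ, exp (-α * 1) * f α := integral_const_mul _ _
    _ ≤ exp (-δ * (x - 1)) * laplace f 1 := by
        gcongr
        exact setIntegral_le_laplace hf hf0 zero_le_one (Ioi_subset_Ioi hδ)

end Laplace

section LaplaceAsymptotics

variable {f g : ℝ → ℝ} {δ : ℝ}

lemma setIntegral_Ioc_pos (hf : IntegrableOn f (Ioi 0)) (hf_pos : ∀ α ∈ Ioi 0, 0 < f α)
    {s : ℝ} (hs : 0 < s) : 0 < ∫ α in Ioc 0 s, f α := by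
  rw [setIntegral_pos_iff_support_of_nonneg_ae
    ((ae_restrict_mem measurableSet_Ioc).mono fun α hα => (hf_pos α hα.1).le)
    (hf.mono_set Ioc_subset_Ioi_self)]
  refine (measure_mono (s := Ioc 0 s) (t := Function.support f ∩ Ioc 0 s)
    fun α hα => ⟨(hf_pos α hα.1).ne', hα⟩).trans_lt' ?_
  simpa using hs

lemma exp_neg_mul_isLittleO_laplace (hf : IntegrableOn f (Ioi 0))
    (hf_pos : ∀ α ∈ Ioi 0, 0 < f α) (hδ : 0 < δ) :
    (fun x => exp (-δ * x)) =o[atTop] laplace f := by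
  have hf0 : ∀ α ∈ Ioi 0, 0 ≤ f α := fun α hα => (hf_pos α hα).le
  have hF := setIntegral_Ioc_pos hf hf_pos (half_pos hδ)
  have hbig : (fun x => exp (-(δ / 2) * x)) =O[atTop] laplace f := by
    refine .of_bound (∫ α in Ioc 0 (δ / 2), f α)⁻¹ ?_
    filter_upwards [eventually_ge_atTop 0] with x hx
    rw [norm_of_nonneg (exp_pos _).le, norm_of_nonneg (laplace_nonneg hf0 x),
      le_inv_mul_iff₀ hF, mul_comm]
    exact exp_neg_mul_mul_setIntegral_le_laplace hf hf0 hx _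
  refine IsLittleO.trans_isBigO ?_ hbig
  rw [isLittleO_exp_comp_exp_comp]
  refine (tendsto_id.const_mul_atTop (half_pos hδ)).congr fun x => ?_
  simp only [id]
  ring

theorem laplace_isLittleO_laplace_of_isLittleO (hf : IntegrableOn f (Ioi 0))
    (hf_pos : ∀ α ∈ Ioi 0, 0 < f α) (hg : IntegrableOn g (Ioi 0)) (hgf : g =o[𝓝[>] 0] f) :
    laplace g =o[atTop] laplace f := by
  have hf0 : ∀ α ∈ Ioi 0, 0 ≤ f α := fun α hα => (hf_pos α hα).le
  refine isLittleO_iff.2 fun ε hε => ?_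
  obtain ⟨δ, hδ, hnear⟩ := mem_nhdsGT_iff_exists_Ioc_subset.1 (hgf.def (half_pos hε))
  set G := fun α => ‖g α‖
  have htail := ((exp_neg_mul_isLittleO_laplace hf hf_pos hδ).const_mul_left
    (exp δ * laplace G 1)).def (half_pos hε)
  filter_upwards [htail, eventually_ge_atTop 1] with x htail hx
  have hx0 : 0 ≤ x := zero_le_one.trans hx
  rw [norm_of_nonneg (laplace_nonneg hf0 x)] at htail ⊢
  have hnear_int : ∫ α in Ioc 0 δ, exp (-α * x) * G α ≤ ε / 2 * laplace f x :=
    calc ∫ α in Ioc 0 δ, exp (-α * x) * G α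
        ≤ ∫ α in Ioc 0 δ, ε / 2 * (exp (-α * x) * f α) := by
          refine setIntegral_mono_on ((integrableOn_exp_neg_mul_mul hg.norm hx0).mono_set
            Ioc_subset_Ioi_self) (((integrableOn_exp_neg_mul_mul hf hx0).mono_set
            Ioc_subset_Ioi_self).const_mul _) measurableSet_Ioc fun α hα => ?_
          have h : ‖g α‖ ≤ ε / 2 * ‖f α‖ := hnear hα
          rw [norm_of_nonneg (hf0 α hα.1)] at h
          rw [mul_left_comm]
          gcongr
      _ = ε / 2 * ∫ α in Ioc 0 δ, exp (-α * x) * f α := integral_const_mul _ _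
      _ ≤ ε / 2 * laplace f x := by
          gcongr
          exact setIntegral_le_laplace hf hf0 hx0 Ioc_subset_Ioi_self
  have hexp : exp (-δ * (x - 1)) * laplace G 1 = ‖exp δ * laplace G 1 * exp (-δ * x)‖ := by
    have hG1 := laplace_nonneg (fun α _ => norm_nonneg (g α)) 1
    rw [norm_of_nonneg (by positivity), mul_right_comm, ← exp_add]
    ring_nf
  calc ‖laplace g x‖
      ≤ laplace G x := norm_laplace_le g x
    _ ≤ (∫ α in Ioc 0 δ, exp (-α * x) * G α) + exp (-δ * (x - 1)) * laplace G 1 :=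
        laplace_le_setIntegral_add hg.norm (fun _ _ => norm_nonneg _) hδ.le hx
    _ ≤ ε / 2 * laplace f x + ε / 2 * laplace f x := add_le_add hnear_int (hexp.trans_le htail)
    _ = ε * laplace f x := by ring

end LaplaceAsymptotics

section LogNormal

variable {μ σ : ℝ}

lemma lnLaplace_eq_laplace (μ σ : ℝ) : lnLaplace μ σ = laplace (lognormalPdf μ σ) := rfl

lemma lognormalPdf_pos (hσ : 0 < σ) {α : ℝ} (hα : 0 < α) : 0 < lognormalPdf μ σ α := by
  unfold lognormalPdf
  positivity

lemma exp_mul_lognormalPdf_exp (hσ : 0 < σ) (t : ℝ) :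
    exp t * lognormalPdf μ σ (exp t) = ProbabilityTheory.gaussianPDFReal μ (σ ^ 2).toNNReal t := by
  simp only [ProbabilityTheory.gaussianPDFReal, lognormalPdf, log_exp,
    Real.coe_toNNReal _ (sq_nonneg σ)]
  rw [show 2 * π * σ ^ 2 = σ ^ 2 * (2 * π) by ring, sqrt_mul (sq_nonneg σ), sqrt_sq hσ.le]
  field_simp

lemma integrableOn_lognormalPdf (hσ : 0 < σ) : IntegrableOn (lognormalPdf μ σ) (Ioi 0) := by
  rw [← range_exp, ← image_univ, integrableOn_image_iff_integrableOn_abs_deriv_smul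
    MeasurableSet.univ (fun t _ => (hasDerivAt_exp t).hasDerivWithinAt) exp_injective.injOn,
    integrableOn_univ]
  simp only [abs_exp, smul_eq_mul, exp_mul_lognormalPdf_exp hσ]
  exact ProbabilityTheory.integrable_gaussianPDFReal _ _

lemma lognormalPdf_inv_mul (μ σ : ℝ) {c : ℝ} (hc : 0 < c) (α : ℝ) :
    c⁻¹ * lognormalPdf μ σ (c⁻¹ * α) = lognormalPdf (μ + log c) σ α := by
  rcases eq_or_ne α 0 with rfl | hα
  · simp [lognormalPdf]
  rw [lognormalPdf, lognormalPdf, log_mul (inv_ne_zero hc.ne') hα, log_inv,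
    show -log c + log α - μ = log α - (μ + log c) by ring]
  field_simp

lemma lognormalPdf_add (μ ν σ β : ℝ) :
    lognormalPdf (μ + ν) σ β = lognormalPdf μ σ β * exp (ν / σ ^ 2 * (log β - (μ + ν / 2))) := by
  rcases eq_or_ne σ 0 with rfl | hσ
  · simp [lognormalPdf]
  rw [lognormalPdf, lognormalPdf, mul_assoc _ (exp _), ← exp_add]
  congr 2
  field_simp
  ring

lemma lognormalPdf_add_isLittleO (hσ : σ ≠ 0) {ν : ℝ} (hν : 0 < ν) :
    lognormalPdf (μ + ν) σ =o[𝓝[>] 0] lognormalPdf μ σ := by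
  have hdecay : Tendsto (fun β => exp (ν / σ ^ 2 * (log β - (μ + ν / 2)))) (𝓝[>] 0) (𝓝 0) :=
    tendsto_exp_atBot.comp <| (tendsto_atBot_add_const_right _ _
      tendsto_log_nhdsGT_zero).const_mul_atBot (by positivity)
  simpa only [← lognormalPdf_add, mul_one] using
    (isBigO_refl (lognormalPdf μ σ) _).mul_isLittleO (isLittleO_one_iff ℝ |>.2 hdecay)

end LogNormal

/-- For every `c > 1`, `L(cx)/L(x) → 0` as `x → ∞`. -/
theorem lognormal_laplace_ratio_tendsto_zero (μ σ : ℝ) (hσ : 0 < σ) (c : ℝ) (hc : 1 < c) :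
    Tendsto (fun x : ℝ => lnLaplace μ σ (c * x) / lnLaplace μ σ x) atTop (nhds 0) := by
  have hc0 : 0 < c := one_pos.trans hc
  have hscale (x : ℝ) : lnLaplace μ σ (c * x) = laplace (lognormalPdf (μ + log c) σ) x := by
    rw [lnLaplace_eq_laplace, laplace_mul_left _ hc0]
    simp only [lognormalPdf_inv_mul μ σ hc0]
  simp only [hscale, lnLaplace_eq_laplace]
  exact (laplace_isLittleO_laplace_of_isLittleO (integrableOn_lognormalPdf hσ)
    (fun _ => lognormalPdf_pos hσ) (integrableOn_lognormalPdf hσ)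
    (lognormalPdf_add_isLittleO hσ.ne' (log_pos hc))).tendsto_div_nhds_zero
end

section
/- Let q_j be mixed-logit demand with Gamma(r, β) mixing (r > 0, β > 0, market size M > 0, mean utilities δ ∈ ℝ^J), and let H_j(p) = ∫₀^∞ z^{r−1} Ψ_j(z; p) dz with Ψ_j(z; p) = exp(δ_j − z p_j)/(1 + Σ_{ℓ=1}^J exp(δ_ℓ − z p_ℓ)). Then for each fixed ray p ∈ ℝ_{++}^J, λ^r q_j(λ p) → (M β^r/Γ(r)) H_j(p) as λ → ∞. -/
open MeasureTheory Real Filter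

/-- Logit choice probability of product `j` at prices `p`, mean utilities `δ`,
and price coefficient `α`. -/
noncomputable def logitShare {J : ℕ} (δ : Fin J → ℝ) (j : Fin J) (p : Fin J → ℝ) (α : ℝ) : ℝ :=
  Real.exp (δ j - α * p j) / (1 + ∑ l, Real.exp (δ l - α * p l))

/-- Rescaled logit kernel `Ψ_j(z; p)`. -/
noncomputable def Psi {J : ℕ} (δ : Fin J → ℝ) (j : Fin J) (z : ℝ) (p : Fin J → ℝ) : ℝ :=
  Real.exp (δ j - z * p j) / (1 + ∑ l, Real.exp (δ l - z * p l))

/-- Mixed-logit demand for product `j` with `Gamma(r, β)` mixing over the price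
coefficient, market size `M`. -/
noncomputable def qG {J : ℕ} (δ : Fin J → ℝ) (M r β : ℝ) (j : Fin J) (p : Fin J → ℝ) : ℝ :=
  M * ∫ α in Set.Ioi (0 : ℝ),
    logitShare δ j p α * (β ^ r / Real.Gamma r * α ^ (r - 1) * Real.exp (-β * α))

/-- Limit demand term `H_j(p) = ∫₀^∞ z^{r−1} Ψ_j(z; p) dz`. -/
noncomputable def Hfun {J : ℕ} (δ : Fin J → ℝ) (r : ℝ) (j : Fin J) (p : Fin J → ℝ) : ℝ :=
  ∫ z in Set.Ioi (0 : ℝ), z ^ (r - 1) * Psi δ j z p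

/-- Market-interaction correction `C_j(p)`. -/
noncomputable def Cfun {J : ℕ} (δ : Fin J → ℝ) (r : ℝ) (j : Fin J) (p : Fin J → ℝ) : ℝ :=
  (1 / Real.Gamma r) * ∫ u in Set.Ioi (0 : ℝ),
    u ^ (r - 1) * Real.exp (-u) / (1 + ∑ l, Real.exp (δ l - p l / p j * u))

/-- Partial derivative of `F : (Fin J → ℝ) → ℝ` in the `k`-th coordinate at `p`. -/
noncomputable def pd {J : ℕ} (F : (Fin J → ℝ) → ℝ) (k : Fin J) (p : Fin J → ℝ) : ℝ :=
  deriv (fun t => F (Function.update p k t)) (p k)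

/-!
The substitution `z = λα` gives
`λ^r q_j(λp) = (Mβ^r/Γ(r)) ∫₀^∞ z^{r-1} Ψ_j(z; p) e^{-βz/λ} dz`.
The damping factor `e^{-βz/λ}` lies in `(0, 1]` and tends to `1`, while
`z^{r-1} Ψ_j(z; p) ≤ e^{δ_j} z^{r-1} e^{-p_j z}` is integrable because `r > 0` and `p_j > 0`;
dominated convergence concludes.
-/

open Set

lemma Psi_nonneg {J : ℕ} (δ : Fin J → ℝ) (j : Fin J) (z : ℝ) (p : Fin J → ℝ) :
    0 ≤ Psi δ j z p := by
  unfold Psi; positivity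

lemma Psi_le_exp {J : ℕ} (δ : Fin J → ℝ) (j : Fin J) (z : ℝ) (p : Fin J → ℝ) :
    Psi δ j z p ≤ exp (δ j - z * p j) :=
  div_le_self (exp_pos _).le (le_add_of_nonneg_right (by positivity))

lemma continuous_Psi {J : ℕ} (δ : Fin J → ℝ) (j : Fin J) (p : Fin J → ℝ) :
    Continuous fun z => Psi δ j z p :=
  Continuous.div (by fun_prop) (by fun_prop) fun _ => by positivity

lemma logitShare_smul {J : ℕ} (δ : Fin J → ℝ) (j : Fin J) (p : Fin J → ℝ) (l α : ℝ) :
    logitShare δ j (l • p) α = Psi δ j (l * α) p := by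
  simp only [logitShare, Psi, Pi.smul_apply, smul_eq_mul, mul_assoc, mul_left_comm α]

lemma integrableOn_rpow_mul_Psi {J : ℕ} (δ : Fin J → ℝ) (j : Fin J) {p : Fin J → ℝ}
    (hpj : 0 < p j) {r : ℝ} (hr : 0 < r) :
    IntegrableOn (fun z => z ^ (r - 1) * Psi δ j z p) (Ioi 0) := by
  have hbound : IntegrableOn (fun z : ℝ => exp (δ j) * (z ^ (r - 1) * exp (-p j * z ^ (1 : ℝ))))
      (Ioi 0) :=
    (integrableOn_rpow_mul_exp_neg_mul_rpow (by linarith) one_pos hpj).const_mul _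
  refine hbound.mono' ?_ ?_
  · exact ((continuousOn_id.rpow_const fun z hz => Or.inl (ne_of_gt hz)).mul
      (continuous_Psi δ j p).continuousOn).aestronglyMeasurable measurableSet_Ioi
  · filter_upwards [ae_restrict_mem measurableSet_Ioi] with z (hz : 0 < z)
    rw [norm_of_nonneg (mul_nonneg (rpow_nonneg hz.le _) (Psi_nonneg δ j z p)), rpow_one,
      mul_left_comm, ← exp_add]
    exact mul_le_mul_of_nonneg_left ((Psi_le_exp δ j z p).trans_eq (by ring_nf))
      (rpow_nonneg hz.le _)

theorem tendsto_setIntegral_mul_exp_neg_div_atTop {g : ℝ → ℝ} (hg : IntegrableOn g (Ioi 0))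
    {β : ℝ} (hβ : 0 ≤ β) :
    Tendsto (fun l => ∫ z in Ioi 0, g z * exp (-β * z / l)) atTop
      (nhds (∫ z in Ioi 0, g z)) := by
  refine tendsto_integral_filter_of_dominated_convergence (fun z => ‖g z‖)
    (Eventually.of_forall fun l => hg.aestronglyMeasurable.mul (by fun_prop))
    ?_ hg.norm (Eventually.of_forall fun z => ?_)
  · filter_upwards [eventually_gt_atTop 0] with l hl
    filter_upwards [ae_restrict_mem measurableSet_Ioi] with z (hz : 0 < z)
    rw [norm_mul, norm_of_nonneg (exp_pos _).le]
    refine mul_le_of_le_one_right (norm_nonneg _) (exp_le_one_iff.mpr ?_)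
    rw [neg_mul, neg_div]
    exact neg_nonpos.mpr (by positivity)
  · simpa using (tendsto_const_nhds.div_atTop tendsto_id).rexp.const_mul (g z)

lemma rpow_mul_qG_smul {J : ℕ} (δ : Fin J → ℝ) (M r β : ℝ) (j : Fin J) (p : Fin J → ℝ)
    {l : ℝ} (hl : 0 < l) :
    l ^ r * qG δ M r β j (l • p) =
      M * (β ^ r / Gamma r) * ∫ z in Ioi 0, z ^ (r - 1) * Psi δ j z p * exp (-β * z / l) := by
  set c := β ^ r / Gamma r
  set g : ℝ → ℝ := fun z => Psi δ j z p * (c * (z / l) ^ (r - 1) * exp (-β * (z / l)))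
  have hsubst : ∫ α in Ioi 0, logitShare δ j (l • p) α * (c * α ^ (r - 1) * exp (-β * α)) =
      ∫ α in Ioi 0, g (l * α) := by
    simp only [g, logitShare_smul, mul_div_cancel_left₀ _ hl.ne']
  have hrescale : ∫ z in Ioi 0, g z =
      c / l ^ (r - 1) * ∫ z in Ioi 0, z ^ (r - 1) * Psi δ j z p * exp (-β * z / l) := by
    rw [← integral_const_mul]
    refine setIntegral_congr_fun measurableSet_Ioi fun z (hz : 0 < z) => ?_
    simp only [g, div_rpow hz.le hl.le]
    field_simp
  rw [qG, hsubst, integral_comp_mul_left_Ioi g 0 hl, mul_zero, hrescale, smul_eq_mul,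
    rpow_sub_one hl.ne']
  field_simp

theorem qG_ray_limit_general {J : ℕ} (M : ℝ)
    (δ : Fin J → ℝ) (r β : ℝ) (hr : 0 < r) (hβ : 0 < β)
    (p : Fin J → ℝ) (hp : ∀ i, 0 < p i) (j : Fin J) :
    Tendsto (fun l : ℝ => l ^ r * qG δ M r β j (l • p)) atTop
      (nhds (M * β ^ r / Real.Gamma r * Hfun δ r j p)) := by
  have hdamped := (tendsto_setIntegral_mul_exp_neg_div_atTop
    (integrableOn_rpow_mul_Psi δ j (hp j) hr) hβ.le).const_mul (M * (β ^ r / Gamma r))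
  rw [mul_div_assoc]
  refine hdamped.congr' ?_
  filter_upwards [eventually_gt_atTop 0] with l hl
  exact (rpow_mul_qG_smul δ M r β j p hl).symm

/-- Along any ray `p ∈ ℝ_{++}^J`, `λ^r q_j(λp) → (Mβ^r/Γ(r)) H_j(p)` as `λ → ∞`. -/
theorem qG_ray_limit {J : ℕ} (hJ : 1 ≤ J) (M : ℝ) (hM : 0 < M)
    (δ : Fin J → ℝ) (r β : ℝ) (hr : 0 < r) (hβ : 0 < β)
    (p : Fin J → ℝ) (hp : ∀ i, 0 < p i) (j : Fin J) :
    Tendsto (fun l : ℝ => l ^ r * qG δ M r β j (l • p)) atTop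
      (nhds (M * β ^ r / Real.Gamma r * Hfun δ r j p)) :=
  qG_ray_limit_general M δ r β hr hβ p hp j
end
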